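/- For every n ≥ 1 and every path ξ = (ξ_n,…,ξ_1) ∈ Ω_n, the squared norm of the weight satisfies ‖w(ξ)‖² = ⟨𝟙, P̃_{ξ_n}···P̃_{ξ_2} φ_{ξ_1}⟩, where 𝟙 = (1,1)ᵀ. In particular, ‖w(ξ)‖² equals the probability that the (p₀,p)-correlated random walker with parameters p = |a|² and p₀ = |cα+dβ|² walks along the path ξ. -/

import Mathlib

open Matrix Filter
open scoped BigOperators Classical

noncomputable section

/-- Index in `Fin 2` of a direction: `false` ↔ `-1` (index `0`), `true` ↔ `1` (index `1`). -/
def bidx (b : Bool) : Fin 2 := if b then 1 else 0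

/-- The standard basis vector `e_j`, `j ∈ {-1,1}`, of `ℂ²`. -/
def eVec (b : Bool) : Fin 2 → ℂ := fun i => if i = bidx b then 1 else 0

/-- The projection `e_j e_j†`. -/
def projC (b : Bool) : Matrix (Fin 2) (Fin 2) ℂ :=
  Matrix.single (bidx b) (bidx b) 1

/-- `P_j = e_j e_j† U`. -/
def pMat (U : Matrix (Fin 2) (Fin 2) ℂ) (b : Bool) : Matrix (Fin 2) (Fin 2) ℂ :=
  projC b * U

/-- The weight of a path `ξ = (ξ_n, …, ξ_1)` (here `ξ i` is step `i+1`):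
`w(ξ) = P_{ξ_n} ⋯ P_{ξ_1} φ₀`. -/
def weight (U : Matrix (Fin 2) (Fin 2) ℂ) (φ₀ : Fin 2 → ℂ) {n : ℕ} (ξ : Fin n → Bool) :
    Fin 2 → ℂ :=
  ((List.ofFn fun i => pMat U (ξ i)).reverse.prod).mulVec φ₀

/-- The complex inner product `⟨v, w⟩`, conjugate-linear in the first slot. -/
def cdot (v w : Fin 2 → ℂ) : ℂ := ∑ i, (starRingEnd ℂ) (v i) * w i

/-- The decoherence matrix restricted to a set `A` of pairs of paths. -/
def decMat (U : Matrix (Fin 2) (Fin 2) ℂ) (φ₀ : Fin 2 → ℂ) {n : ℕ}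
    (A : Set ((Fin n → Bool) × (Fin n → Bool))) :
    Matrix (Fin n → Bool) (Fin n → Bool) ℂ :=
  Matrix.of fun ξ η =>
    if (ξ, η) ∈ A then cdot (weight U φ₀ ξ) (weight U φ₀ η) else 0

/-- `ξ_1 + ⋯ + ξ_n ∈ ℤ`, each step being `±1`. -/
def pathSum {n : ℕ} (ξ : Fin n → Bool) : ℤ := ∑ i, (if ξ i then 1 else -1)

/-- `A₀^{(n)}`: pairs of paths with the same final direction (paths have length `n+1`). -/
def A0 (n : ℕ) : Set ((Fin (n+1) → Bool) × (Fin (n+1) → Bool)) :=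
  {x | x.1 (Fin.last n) = x.2 (Fin.last n)}

/-- `A_P^{(n)}`: pairs of paths with the same final direction and the same endpoint. -/
def AP (n : ℕ) : Set ((Fin (n+1) → Bool) × (Fin (n+1) → Bool)) :=
  {x | x.1 (Fin.last n) = x.2 (Fin.last n) ∧ pathSum x.1 = pathSum x.2}

/-- `A₁^{(n)}`: the diagonal pairs. -/
def A1 (n : ℕ) : Set ((Fin (n+1) → Bool) × (Fin (n+1) → Bool)) :=
  {x | x.1 = x.2}

/-- The von Neumann entropy `S(D) = −Σᵢ λᵢ log₂ λᵢ`, summing over the eigenvalues with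
multiplicity (the roots of the characteristic polynomial; they are real for a PSD Hermitian
matrix), with the convention `0 · log₂ 0 = 0`. -/
def vnEntropy {I : Type*} [Fintype I] [DecidableEq I] (D : Matrix I I ℂ) : ℝ :=
  -((D.charpoly.roots).map fun lam => lam.re * Real.logb 2 lam.re).sum

/-- The real projection `e_j e_j†`. -/
def projR (b : Bool) : Matrix (Fin 2) (Fin 2) ℝ :=
  Matrix.single (bidx b) (bidx b) 1

/-- The stochastic matrix `M = [[p, q], [q, p]]` of the correlated random walk, `q = 1 − p`. -/
def rwM (p : ℝ) : Matrix (Fin 2) (Fin 2) ℝ := !![p, 1-p; 1-p, p]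

/-- The initial vector `φ = (q₀, p₀)ᵀ` of the correlated random walk, `q₀ = 1 − p₀`. -/
def rwφ (p₀ : ℝ) : Fin 2 → ℝ := ![1 - p₀, p₀]

/-- `P̃_{ξ_n} ⋯ P̃_{ξ_2} φ_{ξ_1}`, where `P̃_j = e_j e_j† M` and `φ_j = e_j e_j† φ`. -/
def rwVec (p p₀ : ℝ) : {n : ℕ} → (Fin n → Bool) → (Fin 2 → ℝ)
  | 0, _ => rwφ p₀
  | n + 1, ξ =>
      ((List.ofFn fun i : Fin n => projR (ξ i.succ) * rwM p).reverse.prod).mulVec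
        ((projR (ξ 0)).mulVec (rwφ p₀))

/-- `p_L^{(n)}(j)`: the probability that the `(p₀,p)`-correlated random walk is at `j`
at time `n`, having arrived from the left. -/
def pL (p p₀ : ℝ) (n : ℕ) (j : ℤ) : ℝ :=
  ∑ ξ ∈ Finset.univ.filter (fun ξ : Fin n → Bool => pathSum ξ = j), rwVec p p₀ ξ 0

/-- `p_R^{(n)}(j)`: the probability that the `(p₀,p)`-correlated random walk is at `j`
at time `n`, having arrived from the right. -/
def pR (p p₀ : ℝ) (n : ℕ) (j : ℤ) : ℝ :=
  ∑ ξ ∈ Finset.univ.filter (fun ξ : Fin n → Bool => pathSum ξ = j), rwVec p p₀ ξ 1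

/-! Each `P_j` maps into the line `ℂ e_j`, so `w(ξ) = z e_{ξ_n}` for a scalar `z`, and one more
step multiplies `z` by the entry `U_{ξ_{n+1} ξ_n}`. Unitarity makes `(|U_{jk}|²)` the doubly
stochastic matrix `M` and `(|(Uφ₀)_j|²)` the vector `φ`, so `|z|²` evolves exactly as the single
nonzero entry of `P̃_{ξ_n} ⋯ P̃_{ξ_2} φ_{ξ_1}`. -/

section Unitary

variable {𝕜 n : Type*} [RCLike 𝕜] [Fintype n]

lemma star_dotProduct_self_eq_sum_norm_sq (x : n → 𝕜) :
    star x ⬝ᵥ x = ((∑ i, ‖x i‖ ^ 2 : ℝ) : 𝕜) := by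
  simp [dotProduct, RCLike.conj_mul]

variable [DecidableEq n] {U : Matrix n n 𝕜}

lemma sum_norm_sq_mulVec_of_mem_unitaryGroup (hU : U ∈ Matrix.unitaryGroup n 𝕜) (v : n → 𝕜) :
    ∑ i, ‖(U *ᵥ v) i‖ ^ 2 = ∑ i, ‖v i‖ ^ 2 := by
  have h : star (U *ᵥ v) ⬝ᵥ (U *ᵥ v) = star v ⬝ᵥ v := by
    rw [star_mulVec, dotProduct_mulVec, vecMul_vecMul, ← star_eq_conjTranspose,
      Unitary.star_mul_self_of_mem hU, vecMul_one]
  simpa only [star_dotProduct_self_eq_sum_norm_sq, RCLike.ofReal_inj] using h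

lemma sum_norm_sq_col_of_mem_unitaryGroup (hU : U ∈ Matrix.unitaryGroup n 𝕜) (j : n) :
    ∑ i, ‖U i j‖ ^ 2 = 1 := by
  simpa [Pi.single_apply, apply_ite] using
    sum_norm_sq_mulVec_of_mem_unitaryGroup hU (Pi.single j 1)

lemma sum_norm_sq_row_of_mem_unitaryGroup (hU : U ∈ Matrix.unitaryGroup n 𝕜) (i : n) :
    ∑ j, ‖U i j‖ ^ 2 = 1 := by
  simpa using sum_norm_sq_col_of_mem_unitaryGroup (Unitary.star_mem hU) i

end Unitary

lemma norm_sq_apply_eq_rwφ {𝕜 : Type*} [RCLike 𝕜] {w : Fin 2 → 𝕜} (hw : ∑ i, ‖w i‖ ^ 2 = 1)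
    (j : Fin 2) : ‖w j‖ ^ 2 = rwφ (‖w 1‖ ^ 2) j := by
  rw [Fin.sum_univ_two] at hw
  fin_cases j <;> simp [rwφ]; linarith

lemma norm_sq_apply_eq_rwM_of_mem_unitaryGroup {𝕜 : Type*} [RCLike 𝕜]
    {U : Matrix (Fin 2) (Fin 2) 𝕜} (hU : U ∈ Matrix.unitaryGroup (Fin 2) 𝕜) (j k : Fin 2) :
    ‖U j k‖ ^ 2 = rwM (‖U 0 0‖ ^ 2) j k := by
  have hcol₀ := sum_norm_sq_col_of_mem_unitaryGroup hU 0
  have hcol₁ := sum_norm_sq_col_of_mem_unitaryGroup hU 1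
  have hrow₀ := sum_norm_sq_row_of_mem_unitaryGroup hU 0
  simp only [Fin.sum_univ_two] at hcol₀ hcol₁ hrow₀
  fin_cases j <;> fin_cases k <;>
    simp only [rwM, of_apply, cons_val', cons_val_zero, cons_val_one, cons_val_fin_one,
      Fin.zero_eta, Fin.mk_one] <;> linarith

lemma single_self_one_mulVec {R n : Type*} [Fintype n] [DecidableEq n] [NonAssocSemiring R]
    (i : n) (v : n → R) : Matrix.single i i (1 : R) *ᵥ v = Pi.single i (v i) := by
  rw [single_mulVec, one_mul]; rfl

lemma weight_succ (U : Matrix (Fin 2) (Fin 2) ℂ) (φ₀ : Fin 2 → ℂ) {n : ℕ}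
    (ξ : Fin (n + 1) → Bool) :
    weight U φ₀ ξ = projC (ξ (Fin.last n)) *ᵥ (U *ᵥ weight U φ₀ (Fin.init ξ)) := by
  simp only [weight, List.ofFn_succ', List.concat_eq_append, List.reverse_append,
    List.reverse_cons, List.reverse_nil, List.nil_append, List.singleton_append,
    List.prod_cons, pMat, mulVec_mulVec, Matrix.mul_assoc, Fin.init]

lemma weight_zero (U : Matrix (Fin 2) (Fin 2) ℂ) (φ₀ : Fin 2 → ℂ) (ξ : Fin 0 → Bool) :
    weight U φ₀ ξ = φ₀ := by
  simp [weight]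

lemma rwVec_one (p p₀ : ℝ) (ξ : Fin 1 → Bool) : rwVec p p₀ ξ = projR (ξ 0) *ᵥ rwφ p₀ := by
  simp [rwVec]

lemma rwVec_succ (p p₀ : ℝ) {n : ℕ} (ξ : Fin (n + 2) → Bool) :
    rwVec p p₀ ξ = projR (ξ (Fin.last (n + 1))) *ᵥ (rwM p *ᵥ rwVec p p₀ (Fin.init ξ)) := by
  simp only [rwVec, List.ofFn_succ', List.concat_eq_append, List.reverse_append,
    List.reverse_cons, List.reverse_nil, List.nil_append, List.singleton_append,
    List.prod_cons, Fin.succ_last, Fin.succ_castSucc, Fin.castSucc_zero, mulVec_mulVec,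
    Matrix.mul_assoc, Fin.init]

lemma weight_eq_single_and_rwVec_eq_single {U : Matrix (Fin 2) (Fin 2) ℂ} {φ₀ : Fin 2 → ℂ}
    {p p₀ : ℝ} (hM : ∀ j k, ‖U j k‖ ^ 2 = rwM p j k) (hφ₀ : ∀ j, ‖(U *ᵥ φ₀) j‖ ^ 2 = rwφ p₀ j) :
    ∀ {n : ℕ} (ξ : Fin (n + 1) → Bool), ∃ z : ℂ,
      weight U φ₀ ξ = Pi.single (bidx (ξ (Fin.last n))) z ∧
        rwVec p p₀ ξ = Pi.single (bidx (ξ (Fin.last n))) (‖z‖ ^ 2)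
  | 0, ξ => ⟨(U *ᵥ φ₀) (bidx (ξ 0)),
      by rw [weight_succ, weight_zero, projC, single_self_one_mulVec]; rfl,
      by rw [rwVec_one, projR, single_self_one_mulVec, hφ₀]; rfl⟩
  | n + 1, ξ => by
    obtain ⟨z, hw, hr⟩ := weight_eq_single_and_rwVec_eq_single hM hφ₀ (Fin.init ξ)
    refine ⟨U (bidx (ξ (Fin.last (n + 1)))) (bidx (Fin.init ξ (Fin.last n))) * z, ?_, ?_⟩
    · rw [weight_succ, hw, projC, single_self_one_mulVec]
      simp
    · rw [rwVec_succ, hr, projR, single_self_one_mulVec, norm_mul, mul_pow, hM]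
      simp

theorem weight_norm_sq_eq_correlated_rw_prob_general
    (a b c d α β : ℂ)
    (hU : !![a, b; c, d] ∈ Matrix.unitaryGroup (Fin 2) ℂ)
    (hφ : ‖α‖ ^ 2 + ‖β‖ ^ 2 = 1)
    (n : ℕ) (ξ : Fin (n+1) → Bool) :
    ∑ i, ‖weight !![a, b; c, d] ![α, β] ξ i‖ ^ 2 =
      (fun _ => (1 : ℝ)) ⬝ᵥ
        rwVec (‖a‖ ^ 2) (‖c * α + d * β‖ ^ 2) ξ := by
  have hM : ∀ j k, ‖!![a, b; c, d] j k‖ ^ 2 = rwM (‖a‖ ^ 2) j k :=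
    norm_sq_apply_eq_rwM_of_mem_unitaryGroup hU
  have hUφ : ∑ i, ‖(!![a, b; c, d] *ᵥ ![α, β]) i‖ ^ 2 = 1 := by
    rw [sum_norm_sq_mulVec_of_mem_unitaryGroup hU, Fin.sum_univ_two]
    exact hφ
  have hUφ₁ : (!![a, b; c, d] *ᵥ ![α, β]) 1 = c * α + d * β := by simp [mul_comm]
  have hφ₀ : ∀ j, ‖(!![a, b; c, d] *ᵥ ![α, β]) j‖ ^ 2 = rwφ (‖c * α + d * β‖ ^ 2) j := by
    rw [← hUφ₁]
    exact norm_sq_apply_eq_rwφ hUφ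
  obtain ⟨z, hw, hr⟩ := weight_eq_single_and_rwVec_eq_single hM hφ₀ ξ
  rw [hw, hr, dotProduct_single]
  simp [Pi.single_apply, apply_ite]

/-- `‖w(ξ)‖² = ⟨𝟙, P̃_{ξ_n} ⋯ P̃_{ξ_2} φ_{ξ_1}⟩`, the probability that the
`(p₀,p)`-correlated random walk with `p = |a|²`, `p₀ = |cα+dβ|²` walks along `ξ`. -/
theorem weight_norm_sq_eq_correlated_rw_prob
    (a b c d α β : ℂ)
    (hU : !![a, b; c, d] ∈ Matrix.unitaryGroup (Fin 2) ℂ)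
    (habcd : a * b * c * d ≠ 0)
    (hφ : ‖α‖ ^ 2 + ‖β‖ ^ 2 = 1)
    (n : ℕ) (ξ : Fin (n+1) → Bool) :
    ∑ i, ‖weight !![a, b; c, d] ![α, β] ξ i‖ ^ 2 =
      (fun _ => (1 : ℝ)) ⬝ᵥ
        rwVec (‖a‖ ^ 2) (‖c * α + d * β‖ ^ 2) ξ :=
  weight_norm_sq_eq_correlated_rw_prob_general a b c d α β hU hφ n ξ
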